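/- Fano inequality for n i.i.d. samples: let X → (Y₁,…,Yₙ) → X̂ be a Markov chain on a finite probability space where Y₁,…,Yₙ are conditionally i.i.d. given X. Then I(X; (Y₁,…,Yₙ)) ≤ n · I(X; Y₁), and consequently, under the hypotheses of the relational Fano inequality, P(E) ≤ (n · I(X; Y₁) + h(P(E)) + log(1 - p_min)) / log((1 - p_min)/p_max). -/

import Mathlib

open Finset

open Classical in
noncomputable def pr {Ω : Type*} [Fintype Ω] (μ : Ω → ℝ) (p : Ω → Prop) : ℝ :=
  ∑ ω ∈ Finset.univ.filter p, μ ω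

def IsPMF {Ω : Type*} [Fintype Ω] (μ : Ω → ℝ) : Prop :=
  (∀ ω, 0 ≤ μ ω) ∧ ∑ ω, μ ω = 1

noncomputable def mutInfo {Ω A B : Type*} [Fintype Ω] [Fintype A] [Fintype B]
    (μ : Ω → ℝ) (X : Ω → A) (Y : Ω → B) : ℝ :=
  ∑ a : A, ∑ b : B, pr μ (fun ω => X ω = a ∧ Y ω = b) *
    Real.log (pr μ (fun ω => X ω = a ∧ Y ω = b) /
      (pr μ (fun ω => X ω = a) * pr μ (fun ω => Y ω = b)))

noncomputable def ent {Ω A : Type*} [Fintype Ω] [Fintype A] (μ : Ω → ℝ) (X : Ω → A) : ℝ :=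
  -∑ a : A, pr μ (fun ω => X ω = a) * Real.log (pr μ (fun ω => X ω = a))

noncomputable def condEnt {Ω A B : Type*} [Fintype Ω] [Fintype A] [Fintype B]
    (μ : Ω → ℝ) (X : Ω → A) (Y : Ω → B) : ℝ :=
  ent μ (fun ω => (X ω, Y ω)) - ent μ Y

noncomputable def binEnt (p : ℝ) : ℝ :=
  -(p * Real.log p) - (1 - p) * Real.log (1 - p)

/-- `X → Y → Z` is a Markov chain: `X` and `Z` are conditionally independent given `Y`. -/
def MarkovChain {Ω A B C : Type*} [Fintype Ω]
    (μ : Ω → ℝ) (X : Ω → A) (Y : Ω → B) (Z : Ω → C) : Prop :=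
  ∀ (a : A) (b : B) (c : C),
    pr μ (fun ω => X ω = a ∧ Y ω = b ∧ Z ω = c) * pr μ (fun ω => Y ω = b) =
      pr μ (fun ω => X ω = a ∧ Y ω = b) * pr μ (fun ω => Y ω = b ∧ Z ω = c)

/-!
Both parts are instances of the log-sum inequality. Conditional independence splits the
information density pointwise: `log (P(x,y) / (P(x) P(y)))` equals
`∑ᵢ log (P(x,yᵢ) / (P(x) P(yᵢ))) - log (P(y) / ∏ᵢ P(yᵢ))`, so averaging gives
`I(X;Y) = ∑ᵢ I(X;Yᵢ) - D(P_Y ‖ ⊗ᵢ P_{Yᵢ}) ≤ ∑ᵢ I(X;Yᵢ) = n I(X;Y₁)`.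
For the Fano bound, coarsening `I(X;X̂) = D(P_{XX̂} ‖ P_X ⊗ P_{X̂})` to the partition `{R, Rᶜ}`
gives `I(X;X̂) ≥ d(P(E) ‖ Q)`, where `Q` is the probability of `R` for independent copies of `X`
and `X̂`. The hypotheses place `Q` in `[p_min, p_max]`, which turns the binary divergence into
the stated bound, and `I(X;X̂) ≤ I(X;Y)` by the Markov property.
-/

open Real

section LogSum

variable {ι : Type*} {s : Finset ι} {a b : ι → ℝ}

lemma sum_pos_of_sum_pos_of_absCont (hb : ∀ i ∈ s, 0 ≤ b i) (hab : ∀ i ∈ s, b i = 0 → a i = 0)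
    (h : 0 < ∑ i ∈ s, a i) : 0 < ∑ i ∈ s, b i := by
  by_contra! hT
  have hb0 := (sum_eq_zero_iff_of_nonneg hb).1 (le_antisymm hT (sum_nonneg hb))
  exact h.ne' (sum_eq_zero fun i hi => hab i hi (hb0 i hi))

lemma mul_log_add_sub_le_mul_log_div {x y c : ℝ} (hx : 0 ≤ x) (hy : 0 ≤ y)
    (hxy : y = 0 → x = 0) (hc : 0 < c) : x * log c + x - y * c ≤ x * log (x / y) := by
  rcases hx.eq_or_lt with rfl | hx
  · simpa using mul_nonneg hy hc.le
  have hy : 0 < y := hy.lt_of_ne' fun h => hx.ne' (hxy h)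
  have key := mul_le_mul_of_nonneg_left
    (one_sub_inv_le_log_of_pos (div_pos hx (mul_pos hy hc))) hx.le
  rw [inv_div, mul_sub, mul_one, mul_div_cancel₀ _ hx.ne', log_div hx.ne' (mul_pos hy hc).ne',
    log_mul hy.ne' hc.ne'] at key
  rw [log_div hx.ne' hy.ne']
  linarith

/-- The log-sum inequality. -/
theorem sum_mul_log_div_sum_le (ha : ∀ i ∈ s, 0 ≤ a i) (hb : ∀ i ∈ s, 0 ≤ b i)
    (hab : ∀ i ∈ s, b i = 0 → a i = 0) :
    (∑ i ∈ s, a i) * log ((∑ i ∈ s, a i) / ∑ i ∈ s, b i) ≤ ∑ i ∈ s, a i * log (a i / b i) := by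
  rcases (sum_nonneg ha).eq_or_lt with hS | hS
  · have ha0 := (sum_eq_zero_iff_of_nonneg ha).1 hS.symm
    rw [← hS, zero_mul, sum_eq_zero fun i hi => by rw [ha0 i hi, zero_mul]]
  have hT := sum_pos_of_sum_pos_of_absCont hb hab hS
  set c := (∑ i ∈ s, a i) / ∑ i ∈ s, b i
  calc (∑ i ∈ s, a i) * log c = ∑ i ∈ s, (a i * log c + a i - b i * c) := by
        rw [sum_sub_distrib, sum_add_distrib, ← sum_mul, ← sum_mul, mul_div_cancel₀ _ hT.ne']
        ring
    _ ≤ ∑ i ∈ s, a i * log (a i / b i) := sum_le_sum fun i hi =>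
        mul_log_add_sub_le_mul_log_div (ha i hi) (hb i hi) (hab i hi) (div_pos hS hT)

theorem sum_fiberwise_mul_log_div_le {κ : Type*} [Fintype κ] [DecidableEq κ] (g : ι → κ)
    (ha : ∀ i ∈ s, 0 ≤ a i) (hb : ∀ i ∈ s, 0 ≤ b i) (hab : ∀ i ∈ s, b i = 0 → a i = 0) :
    ∑ k, (∑ i ∈ s with g i = k, a i) *
        log ((∑ i ∈ s with g i = k, a i) / ∑ i ∈ s with g i = k, b i) ≤
      ∑ i ∈ s, a i * log (a i / b i) := by
  rw [← sum_fiberwise s g]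
  exact sum_le_sum fun k _ => sum_mul_log_div_sum_le (fun i hi => ha i (mem_filter.1 hi).1)
    (fun i hi => hb i (mem_filter.1 hi).1) (fun i hi => hab i (mem_filter.1 hi).1)

theorem sum_mul_log_div_nonneg (ha : ∀ i ∈ s, 0 ≤ a i) (hb : ∀ i ∈ s, 0 ≤ b i)
    (hab : ∀ i ∈ s, b i = 0 → a i = 0) (h : ∑ i ∈ s, b i = ∑ i ∈ s, a i) :
    0 ≤ ∑ i ∈ s, a i * log (a i / b i) := by
  simpa [h, log_div_self] using sum_mul_log_div_sum_le ha hb hab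

end LogSum

lemma mul_log_div_eq (x : ℝ) {y : ℝ} (hy : y ≠ 0) : x * log (x / y) = x * log x - x * log y := by
  rcases eq_or_ne x 0 with rfl | hx
  · simp
  rw [log_div hx hy, mul_sub]

lemma mul_log_div_le_mul_log_div {x y z : ℝ} (hx : 0 ≤ x) (hy : 0 < x → 0 < y) (hyz : y ≤ z) :
    x * log (x / z) ≤ x * log (x / y) := by
  rcases hx.eq_or_lt with rfl | hx
  · simp
  have hy := hy hx
  exact mul_le_mul_of_nonneg_left
    (log_le_log (div_pos hx (hy.trans_le hyz)) (div_le_div_of_nonneg_left hx.le hy hyz)) hx.le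

lemma log_div_mul_eq_sum_sub {n : ℕ} (hn : 0 < n) {j x y : ℝ} {ji yi : Fin n → ℝ} (hj : 0 < j)
    (hx : 0 < x) (hy : 0 < y) (hji : ∀ i, 0 < ji i) (hyi : ∀ i, 0 < yi i)
    (h : j * x ^ (n - 1) = ∏ i, ji i) :
    log (j / (x * y)) = ∑ i, log (ji i / (x * yi i)) - log (y / ∏ i, yi i) := by
  have hprod : ∏ i, ji i / (x * yi i) = j / (x * y) * (y / ∏ i, yi i) := by
    rw [prod_div_distrib, prod_mul_distrib, prod_const, card_univ, Fintype.card_fin, ← h]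
    obtain ⟨m, rfl⟩ : ∃ m, n = m + 1 := ⟨n - 1, by omega⟩
    have := prod_pos fun i (_ : i ∈ univ) => hyi i
    rw [Nat.add_sub_cancel, pow_succ]
    field_simp
  rw [← log_prod fun i _ => (div_pos (hji i) (mul_pos hx (hyi i))).ne', hprod,
    log_mul (by positivity) (div_pos hy (prod_pos fun i _ => hyi i)).ne', add_sub_cancel_right]

noncomputable def binKL (p q : ℝ) : ℝ :=
  p * log (p / q) + (1 - p) * log ((1 - p) / (1 - q))

lemma mul_log_le_binKL_add_binEnt {p q pmin pmax : ℝ} (hp0 : 0 ≤ p) (hp1 : p ≤ 1)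
    (hq0 : 0 < p → 0 < q) (hq1 : 0 < 1 - p → 0 < 1 - q) (hmin : pmin ≤ q) (hmax : q ≤ pmax)
    (hmax0 : 0 < pmax) (hsum : pmin + pmax < 1) :
    p * log ((1 - pmin) / pmax) ≤ binKL p q + binEnt p + log (1 - pmin) := by
  have hmin1 : 0 < 1 - pmin := by linarith
  calc p * log ((1 - pmin) / pmax)
      = p * log (p / pmax) + (1 - p) * log ((1 - p) / (1 - pmin)) + binEnt p + log (1 - pmin) := by
        rw [mul_log_div_eq _ hmax0.ne', mul_log_div_eq _ hmin1.ne', log_div hmin1.ne' hmax0.ne',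
          binEnt]
        ring
    _ ≤ binKL p q + binEnt p + log (1 - pmin) := by
        gcongr
        exact add_le_add (mul_log_div_le_mul_log_div hp0 hq0 hmax)
          (mul_log_div_le_mul_log_div (sub_nonneg.2 hp1) hq1 (by linarith))

/-- Under `weightProd μ μ` the coordinates are independent copies of `μ`, so
`(X q.1, Y q.2)` has the product of the laws of `X` and `Y`. -/
def weightProd {Ω Ω' : Type*} (μ : Ω → ℝ) (ν : Ω' → ℝ) : Ω × Ω' → ℝ := fun q => μ q.1 * ν q.2

lemma weightProd_nonneg {Ω Ω' : Type*} {μ : Ω → ℝ} {ν : Ω' → ℝ} (hμ : 0 ≤ μ) (hν : 0 ≤ ν) :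
    0 ≤ weightProd μ ν :=
  fun q => mul_nonneg (hμ q.1) (hν q.2)

section Pr

variable {Ω Ω' A B V W : Type*} [Fintype Ω] [Fintype Ω'] {μ : Ω → ℝ} {ν : Ω' → ℝ}

open Classical in
lemma pr_eq_sum_ite (μ : Ω → ℝ) (p : Ω → Prop) : pr μ p = ∑ ω, if p ω then μ ω else 0 := by
  rw [pr, sum_filter]

lemma pr_congr {p q : Ω → Prop} (h : ∀ ω, p ω ↔ q ω) : pr μ p = pr μ q :=
  congrArg (pr μ) (funext fun ω => propext (h ω))

lemma pr_nonneg (hμ : 0 ≤ μ) (p : Ω → Prop) : 0 ≤ pr μ p :=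
  sum_nonneg fun ω _ => hμ ω

lemma pr_mono (hμ : 0 ≤ μ) {p q : Ω → Prop} (h : ∀ ω, p ω → q ω) : pr μ p ≤ pr μ q := by
  classical
  exact sum_le_sum_of_subset_of_nonneg (monotone_filter_right _ fun ω _ => h ω)
    fun ω _ _ => hμ ω

lemma pr_eq_zero_of_imp (hμ : 0 ≤ μ) {p q : Ω → Prop} (h : ∀ ω, p ω → q ω) (hq : pr μ q = 0) :
    pr μ p = 0 :=
  le_antisymm (hq ▸ pr_mono hμ h) (pr_nonneg hμ p)

lemma pr_and_eq_zero_of_mul_eq_zero (hμ : 0 ≤ μ) {p q : Ω → Prop} (h : pr μ p * pr μ q = 0) :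
    pr μ (fun ω => p ω ∧ q ω) = 0 := by
  rcases mul_eq_zero.1 h with h | h
  · exact pr_eq_zero_of_imp hμ (fun ω hω => hω.1) h
  · exact pr_eq_zero_of_imp hμ (fun ω hω => hω.2) h

lemma pr_true (hμ : ∑ ω, μ ω = 1) : pr μ (fun _ => True) = 1 := by
  simpa [pr_eq_sum_ite] using hμ

lemma pr_le_one (hμ : IsPMF μ) (p : Ω → Prop) : pr μ p ≤ 1 :=
  (pr_mono hμ.1 fun _ _ => trivial).trans_eq (pr_true hμ.2)

lemma pr_not (hμ : ∑ ω, μ ω = 1) (p : Ω → Prop) : pr μ (fun ω => ¬ p ω) = 1 - pr μ p := by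
  classical
  rw [← pr_true hμ, eq_sub_iff_add_eq', pr_eq_sum_ite, pr_eq_sum_ite, pr_eq_sum_ite,
    ← sum_add_distrib]
  exact sum_congr rfl fun ω _ => by by_cases h : p ω <;> simp [h]

lemma pr_and_mem_eq_sum (μ : Ω → ℝ) (p : Ω → Prop) (Z : Ω → V) (S : Finset V) :
    pr μ (fun ω => p ω ∧ Z ω ∈ S) = ∑ v ∈ S, pr μ (fun ω => p ω ∧ Z ω = v) := by
  classical
  simp only [pr_eq_sum_ite]
  rw [sum_comm]
  refine sum_congr rfl fun ω _ => ?_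
  by_cases h : p ω <;> simp [h, sum_ite_eq]

lemma pr_mem_eq_sum (μ : Ω → ℝ) (Z : Ω → V) (S : Finset V) :
    pr μ (fun ω => Z ω ∈ S) = ∑ v ∈ S, pr μ (fun ω => Z ω = v) := by
  simpa using pr_and_mem_eq_sum μ (fun _ => True) Z S

lemma pr_and_comp_eq_sum [Fintype V] [DecidableEq W] (μ : Ω → ℝ) (p : Ω → Prop) (Z : Ω → V)
    (g : V → W) (w : W) :
    pr μ (fun ω => p ω ∧ g (Z ω) = w) = ∑ v with g v = w, pr μ (fun ω => p ω ∧ Z ω = v) := by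
  rw [← pr_and_mem_eq_sum]
  exact pr_congr fun ω => by simp

lemma sum_pr_and_eq [Fintype V] (μ : Ω → ℝ) (p : Ω → Prop) (Z : Ω → V) :
    ∑ v, pr μ (fun ω => p ω ∧ Z ω = v) = pr μ p := by
  simpa using (pr_and_mem_eq_sum μ p Z univ).symm

lemma sum_pr_eq_and [Fintype V] (μ : Ω → ℝ) (p : Ω → Prop) (Z : Ω → V) :
    ∑ v, pr μ (fun ω => Z ω = v ∧ p ω) = pr μ p :=
  (sum_congr rfl fun _ _ => pr_congr fun _ => and_comm).trans (sum_pr_and_eq μ p Z)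

lemma sum_pr_eq_one [Fintype V] (hμ : ∑ ω, μ ω = 1) (Z : Ω → V) :
    ∑ v, pr μ (fun ω => Z ω = v) = 1 := by
  simpa [← pr_true hμ] using sum_pr_and_eq μ (fun _ => True) Z

lemma sum_pr_and_mul_comp [Fintype V] [Fintype W] (μ : Ω → ℝ) (p : Ω → Prop) (Z : Ω → V)
    (g : V → W) (f : W → ℝ) :
    ∑ v, pr μ (fun ω => p ω ∧ Z ω = v) * f (g v) =
      ∑ w, pr μ (fun ω => p ω ∧ g (Z ω) = w) * f w := by
  classical
  simp only [pr_and_comp_eq_sum μ p Z g, sum_mul]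
  rw [← sum_fiberwise univ g]
  exact sum_congr rfl fun w _ => sum_congr rfl fun v hv => by rw [(mem_filter.1 hv).2]

lemma IsPMF.prod (hμ : IsPMF μ) (hν : IsPMF ν) : IsPMF (weightProd μ ν) :=
  ⟨weightProd_nonneg hμ.1 hν.1, by
    simp only [weightProd]
    rw [Fintype.sum_prod_type, ← Fintype.sum_mul_sum, hμ.2, hν.2, one_mul]⟩

lemma pr_weightProd_and (p : Ω → Prop) (r : Ω' → Prop) :
    pr (weightProd μ ν) (fun q => p q.1 ∧ r q.2) = pr μ p * pr ν r := by
  classical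
  simp only [pr_eq_sum_ite, Fintype.sum_mul_sum, ite_zero_mul_ite_zero, ← Fintype.sum_prod_type',
    weightProd]
  congr!

lemma pr_weightProd_eq_sum (p : Ω × Ω' → Prop) :
    pr (weightProd μ ν) p = ∑ y, ν y * pr μ (fun x => p (x, y)) := by
  classical
  simp only [pr_eq_sum_ite, mul_sum, Fintype.sum_prod_type, weightProd]
  rw [sum_comm]
  refine sum_congr rfl fun y _ => sum_congr rfl fun x _ => ?_
  split_ifs <;> simp [mul_comm]

lemma pr_pair_eq (μ : Ω → ℝ) (X : Ω → A) (Y : Ω → B) (z : A × B) :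
    pr μ (fun ω => (X ω, Y ω) = z) = pr μ (fun ω => X ω = z.1 ∧ Y ω = z.2) :=
  pr_congr fun _ => Prod.ext_iff

lemma pr_weightProd_pair_eq (μ : Ω → ℝ) (X : Ω → A) (Y : Ω → B) (z : A × B) :
    pr (weightProd μ μ) (fun q => (X q.1, Y q.2) = z) =
      pr μ (fun ω => X ω = z.1) * pr μ (fun ω => Y ω = z.2) :=
  (pr_pair_eq _ _ _ z).trans (pr_weightProd_and (fun ω => X ω = z.1) (fun ω => Y ω = z.2))

lemma pr_pair_eq_zero_of_weightProd (hμ : 0 ≤ μ) {X : Ω → A} {Y : Ω → B} {z : A × B}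
    (h : pr (weightProd μ μ) (fun q => (X q.1, Y q.2) = z) = 0) :
    pr μ (fun ω => (X ω, Y ω) = z) = 0 := by
  rw [pr_weightProd_pair_eq] at h
  rw [pr_pair_eq]
  exact pr_and_eq_zero_of_mul_eq_zero hμ h

lemma pr_weightProd_mem_pos (hμ : 0 ≤ μ) {X : Ω → A} {Y : Ω → B} {S : Finset (A × B)}
    (h : 0 < pr μ (fun ω => (X ω, Y ω) ∈ S)) :
    0 < pr (weightProd μ μ) (fun q => (X q.1, Y q.2) ∈ S) := by
  rw [pr_mem_eq_sum] at h ⊢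
  exact sum_pos_of_sum_pos_of_absCont (fun z _ => pr_nonneg (weightProd_nonneg hμ hμ) _)
    (fun z _ => pr_pair_eq_zero_of_weightProd hμ) h

lemma mul_log_div_eq_sum_sub_of_condIndep (hμ : 0 ≤ μ) {n : ℕ} (hn : 0 < n) {X : Ω → A}
    {Y : Ω → Fin n → B} {a : A} {y : Fin n → B}
    (hindep : pr μ (fun ω => X ω = a ∧ Y ω = y) * (pr μ (fun ω => X ω = a)) ^ (n - 1) =
        ∏ i : Fin n, pr μ (fun ω => X ω = a ∧ Y ω i = y i)) :
    pr μ (fun ω => X ω = a ∧ Y ω = y) *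
        log (pr μ (fun ω => X ω = a ∧ Y ω = y) /
          (pr μ (fun ω => X ω = a) * pr μ (fun ω => Y ω = y))) =
      ∑ i, pr μ (fun ω => X ω = a ∧ Y ω = y) *
        log (pr μ (fun ω => X ω = a ∧ Y ω i = y i) /
          (pr μ (fun ω => X ω = a) * pr μ (fun ω => Y ω i = y i))) -
      pr μ (fun ω => X ω = a ∧ Y ω = y) *
        log (pr μ (fun ω => Y ω = y) / ∏ i, pr μ (fun ω => Y ω i = y i)) := by
  rcases (pr_nonneg hμ _).eq_or_lt with h | h
  · rw [← h]
    simp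
  have hpos : ∀ {p : Ω → Prop}, (∀ ω, X ω = a ∧ Y ω = y → p ω) → 0 < pr μ p :=
    fun hp => h.trans_le (pr_mono hμ hp)
  rw [← mul_sum, ← mul_sub, log_div_mul_eq_sum_sub hn h (hpos fun ω hω => hω.1)
    (hpos fun ω hω => hω.2) (fun i => hpos ?_) (fun i => hpos ?_) hindep]
  all_goals exact fun ω hω => by simp [hω.1, hω.2]

end Pr

section MutInfo

variable {Ω A B C : Type*} [Fintype Ω] [Fintype A] [Fintype B] [Fintype C] {μ : Ω → ℝ}

lemma mutInfo_eq_sum_prod (μ : Ω → ℝ) (X : Ω → A) (Y : Ω → B) :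
    mutInfo μ X Y = ∑ z : A × B, pr μ (fun ω => (X ω, Y ω) = z) *
      log (pr μ (fun ω => (X ω, Y ω) = z) / pr (weightProd μ μ) (fun q => (X q.1, Y q.2) = z)) := by
  simp only [pr_weightProd_pair_eq]
  simp only [mutInfo, pr_pair_eq, Fintype.sum_prod_type]

theorem binKL_le_mutInfo (hμ : IsPMF μ) (X : Ω → A) (Y : Ω → B) (S : Finset (A × B)) :
    binKL (pr μ (fun ω => (X ω, Y ω) ∈ S)) (pr (weightProd μ μ) (fun q => (X q.1, Y q.2) ∈ S)) ≤
      mutInfo μ X Y := by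
  classical
  have hlogSum : ∀ T : Finset (A × B),
      pr μ (fun ω => (X ω, Y ω) ∈ T) *
          log (pr μ (fun ω => (X ω, Y ω) ∈ T) / pr (weightProd μ μ) (fun q => (X q.1, Y q.2) ∈ T)) ≤
        ∑ z ∈ T, pr μ (fun ω => (X ω, Y ω) = z) *
          log (pr μ (fun ω => (X ω, Y ω) = z) /
            pr (weightProd μ μ) (fun q => (X q.1, Y q.2) = z)) := by
    intro T
    simp only [pr_mem_eq_sum]
    exact sum_mul_log_div_sum_le (fun z _ => pr_nonneg hμ.1 _)
      (fun z _ => pr_nonneg (hμ.prod hμ).1 _) (fun z _ => pr_pair_eq_zero_of_weightProd hμ.1)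
  have hcompl := hlogSum Sᶜ
  simp only [mem_compl, pr_not hμ.2, pr_not (hμ.prod hμ).2] at hcompl
  rw [mutInfo_eq_sum_prod, ← sum_add_sum_compl S]
  exact add_le_add (hlogSum S) hcompl

theorem fano_relational (hμ : IsPMF μ) (X : Ω → A) (Xh : Ω → C) (R : Finset (A × C))
    {pmin pmax : ℝ} (hmax0 : 0 < pmax) (hsum : pmin + pmax < 1)
    (hmin : ∀ ω₀ : Ω, pmin ≤ pr μ (fun ω => (X ω, Xh ω₀) ∈ R))
    (hmax : ∀ ω₀ : Ω, pr μ (fun ω => (X ω, Xh ω₀) ∈ R) ≤ pmax) :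
    pr μ (fun ω => (X ω, Xh ω) ∈ R) * log ((1 - pmin) / pmax) ≤
      mutInfo μ X Xh + binEnt (pr μ (fun ω => (X ω, Xh ω) ∈ R)) + log (1 - pmin) := by
  classical
  set P := pr μ (fun ω => (X ω, Xh ω) ∈ R)
  set Q := pr (weightProd μ μ) (fun q => (X q.1, Xh q.2) ∈ R)
  have hQ : Q = ∑ ω₀, μ ω₀ * pr μ (fun ω => (X ω, Xh ω₀) ∈ R) := pr_weightProd_eq_sum _
  have hQmin : pmin ≤ Q := calc
    pmin = ∑ ω₀, μ ω₀ * pmin := by rw [← sum_mul, hμ.2, one_mul]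
    _ ≤ Q := hQ ▸ sum_le_sum fun ω₀ _ => mul_le_mul_of_nonneg_left (hmin ω₀) (hμ.1 ω₀)
  have hQmax : Q ≤ pmax := calc
    Q ≤ ∑ ω₀, μ ω₀ * pmax :=
      hQ ▸ sum_le_sum fun ω₀ _ => mul_le_mul_of_nonneg_left (hmax ω₀) (hμ.1 ω₀)
    _ = pmax := by rw [← sum_mul, hμ.2, one_mul]
  have hQ1 : 0 < 1 - P → 0 < 1 - Q := by
    simpa only [mem_compl, pr_not hμ.2, pr_not (hμ.prod hμ).2] using
      pr_weightProd_mem_pos (X := X) (Y := Xh) (S := Rᶜ) hμ.1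
  linarith [binKL_le_mutInfo hμ X Xh R, mul_log_le_binKL_add_binEnt (pr_nonneg hμ.1 _)
    (pr_le_one hμ _) (pr_weightProd_mem_pos hμ.1) hQ1 hQmin hQmax hmax0 hsum]

lemma mutInfo_comp_le (hμ : 0 ≤ μ) (X : Ω → A) (Y : Ω → B) (g : B → C) :
    mutInfo μ X (fun ω => g (Y ω)) ≤ mutInfo μ X Y := by
  classical
  refine sum_le_sum fun a _ => ?_
  have hmarg : ∀ c, pr μ (fun ω => X ω = a) * pr μ (fun ω => g (Y ω) = c) =
      ∑ b with g b = c, pr μ (fun ω => X ω = a) * pr μ (fun ω => Y ω = b) := fun c => by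
    rw [← mul_sum]
    simpa using congrArg (pr μ (fun ω => X ω = a) * ·) (pr_and_comp_eq_sum μ (fun _ => True) Y g c)
  simp only [pr_and_comp_eq_sum μ _ Y g, hmarg]
  exact sum_fiberwise_mul_log_div_le g (fun b _ => pr_nonneg hμ _)
    (fun b _ => mul_nonneg (pr_nonneg hμ _) (pr_nonneg hμ _))
    (fun b _ => pr_and_eq_zero_of_mul_eq_zero hμ)

lemma mutInfo_pair_eq_of_markovChain (hμ : 0 ≤ μ) {X : Ω → A} {Y : Ω → B} {Z : Ω → C}
    (hMC : MarkovChain μ X Y Z) : mutInfo μ X (fun ω => (Y ω, Z ω)) = mutInfo μ X Y := by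
  simp only [mutInfo, Fintype.sum_prod_type, Prod.mk.injEq]
  refine sum_congr rfl fun a _ => sum_congr rfl fun b _ => ?_
  have hterm : ∀ c, pr μ (fun ω => X ω = a ∧ Y ω = b ∧ Z ω = c) *
        log (pr μ (fun ω => X ω = a ∧ Y ω = b ∧ Z ω = c) /
          (pr μ (fun ω => X ω = a) * pr μ (fun ω => Y ω = b ∧ Z ω = c))) =
      pr μ (fun ω => X ω = a ∧ Y ω = b ∧ Z ω = c) *
        log (pr μ (fun ω => X ω = a ∧ Y ω = b) /
          (pr μ (fun ω => X ω = a) * pr μ (fun ω => Y ω = b))) := fun c => by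
    rcases (pr_nonneg hμ _).eq_or_lt with h | h
    · rw [← h, zero_mul, zero_mul]
    have hpos : ∀ {p : Ω → Prop}, (∀ ω, X ω = a ∧ Y ω = b ∧ Z ω = c → p ω) → 0 < pr μ p :=
      fun hp => h.trans_le (pr_mono hμ hp)
    have hXa := hpos fun ω hω => hω.1
    congr 2
    rw [div_eq_div_iff (mul_pos hXa (hpos fun ω hω => hω.2)).ne'
      (mul_pos hXa (hpos fun ω hω => hω.2.1)).ne']
    linear_combination pr μ (fun ω => X ω = a) * hMC a b c
  rw [sum_congr rfl fun c _ => hterm c, ← sum_mul]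
  congr 1
  simpa only [and_assoc] using sum_pr_and_eq μ (fun ω => X ω = a ∧ Y ω = b) Z

theorem mutInfo_le_of_markovChain (hμ : 0 ≤ μ) {X : Ω → A} {Y : Ω → B} {Z : Ω → C}
    (hMC : MarkovChain μ X Y Z) : mutInfo μ X Z ≤ mutInfo μ X Y :=
  (mutInfo_comp_le hμ X (fun ω => (Y ω, Z ω)) Prod.snd).trans_eq
    (mutInfo_pair_eq_of_markovChain hμ hMC)

lemma mutInfo_congr_right {X : Ω → A} {Y Y' : Ω → B}
    (h : ∀ a b, pr μ (fun ω => X ω = a ∧ Y ω = b) = pr μ (fun ω => X ω = a ∧ Y' ω = b)) :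
    mutInfo μ X Y = mutInfo μ X Y' := by
  have hmarg : ∀ b, pr μ (fun ω => Y ω = b) = pr μ (fun ω => Y' ω = b) := fun b => by
    rw [← sum_pr_eq_and μ (fun ω => Y ω = b) X, ← sum_pr_eq_and μ (fun ω => Y' ω = b) X]
    exact sum_congr rfl fun a _ => h a b
  simp only [mutInfo, h, hmarg]

theorem sum_pr_mul_log_div_prod_nonneg {ι : Type*} [Fintype ι] [DecidableEq ι] (hμ : IsPMF μ)
    (Y : Ω → ι → B) :
    0 ≤ ∑ y, pr μ (fun ω => Y ω = y) *
      log (pr μ (fun ω => Y ω = y) / ∏ i, pr μ (fun ω => Y ω i = y i)) := by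
  refine sum_mul_log_div_nonneg (fun y _ => pr_nonneg hμ.1 _)
    (fun y _ => prod_nonneg fun i _ => pr_nonneg hμ.1 _) (fun y _ h => ?_) ?_
  · obtain ⟨i, -, hi⟩ := prod_eq_zero_iff.1 h
    exact pr_eq_zero_of_imp hμ.1 (fun ω hω => by rw [hω]) hi
  · rw [sum_pr_eq_one hμ.2, ← Fintype.prod_sum fun i b => pr μ (fun ω => Y ω i = b)]
    exact prod_eq_one fun i _ => sum_pr_eq_one hμ.2 _

theorem mutInfo_le_sum_of_condIndep (hμ : IsPMF μ) {n : ℕ} (hn : 0 < n) (X : Ω → A)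
    (Y : Ω → Fin n → B)
    (hindep : ∀ (a : A) (y : Fin n → B),
      pr μ (fun ω => X ω = a ∧ Y ω = y) * (pr μ (fun ω => X ω = a)) ^ (n - 1) =
        ∏ i : Fin n, pr μ (fun ω => X ω = a ∧ Y ω i = y i)) :
    mutInfo μ X Y ≤ ∑ i, mutInfo μ X (fun ω => Y ω i) := by
  have hcoord : ∀ i a, ∑ y, pr μ (fun ω => X ω = a ∧ Y ω = y) *
        log (pr μ (fun ω => X ω = a ∧ Y ω i = y i) /
          (pr μ (fun ω => X ω = a) * pr μ (fun ω => Y ω i = y i))) =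
      ∑ b, pr μ (fun ω => X ω = a ∧ Y ω i = b) *
        log (pr μ (fun ω => X ω = a ∧ Y ω i = b) /
          (pr μ (fun ω => X ω = a) * pr μ (fun ω => Y ω i = b))) := fun i a =>
    sum_pr_and_mul_comp μ (fun ω => X ω = a) Y (fun y => y i) fun b =>
      log (pr μ (fun ω => X ω = a ∧ Y ω i = b) /
        (pr μ (fun ω => X ω = a) * pr μ (fun ω => Y ω i = b)))
  have htail : ∑ a, ∑ y, pr μ (fun ω => X ω = a ∧ Y ω = y) *
        log (pr μ (fun ω => Y ω = y) / ∏ i, pr μ (fun ω => Y ω i = y i)) =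
      ∑ y, pr μ (fun ω => Y ω = y) *
        log (pr μ (fun ω => Y ω = y) / ∏ i, pr μ (fun ω => Y ω i = y i)) := by
    rw [sum_comm]
    exact sum_congr rfl fun y _ => by rw [← sum_mul, sum_pr_eq_and]
  calc mutInfo μ X Y = ∑ i, mutInfo μ X (fun ω => Y ω i) - ∑ y, pr μ (fun ω => Y ω = y) *
        log (pr μ (fun ω => Y ω = y) / ∏ i, pr μ (fun ω => Y ω i = y i)) := by
        simp only [mutInfo, mul_log_div_eq_sum_sub_of_condIndep hμ.1 hn (hindep _ _),
          sum_sub_distrib, htail, ← hcoord]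
        congr 1
        exact (sum_congr rfl fun a _ => sum_comm).trans sum_comm
    _ ≤ ∑ i, mutInfo μ X (fun ω => Y ω i) := sub_le_self _ (sum_pr_mul_log_div_prod_nonneg hμ Y)

end MutInfo

theorem fano_iid_samples_general {Ω A B C : Type*} [Fintype Ω] [Fintype A] [Fintype B] [Fintype C]
    (n : ℕ) (hn : 0 < n)
    (μ : Ω → ℝ) (hμ : IsPMF μ) (X : Ω → A) (Y : Ω → (Fin n → B)) (Xh : Ω → C)
    (hMC : MarkovChain μ X Y Xh)
    -- conditionally independent coordinates given `X`:
    (hindep : ∀ (a : A) (y : Fin n → B),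
      pr μ (fun ω => X ω = a ∧ Y ω = y) * (pr μ (fun ω => X ω = a)) ^ (n - 1) =
        ∏ i : Fin n, pr μ (fun ω => X ω = a ∧ Y ω i = y i))
    -- conditionally identically distributed given `X`:
    (hid : ∀ (a : A) (i : Fin n) (b : B),
      pr μ (fun ω => X ω = a ∧ Y ω i = b) = pr μ (fun ω => X ω = a ∧ Y ω ⟨0, hn⟩ = b))
    (R : Finset (A × C))
    (pmin pmax : ℝ) (hmax0 : 0 < pmax)
    (hsum : pmin + pmax < 1)
    (hmin : ∀ ω₀ : Ω, pmin ≤ pr μ (fun ω => (X ω, Xh ω₀) ∈ R))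
    (hmax : ∀ ω₀ : Ω, pr μ (fun ω => (X ω, Xh ω₀) ∈ R) ≤ pmax) :
    mutInfo μ X Y ≤ n * mutInfo μ X (fun ω => Y ω ⟨0, hn⟩) ∧
    pr μ (fun ω => (X ω, Xh ω) ∈ R) ≤
      (n * mutInfo μ X (fun ω => Y ω ⟨0, hn⟩) +
          binEnt (pr μ (fun ω => (X ω, Xh ω) ∈ R)) + Real.log (1 - pmin)) /
        Real.log ((1 - pmin) / pmax) := by
  have hsamples : mutInfo μ X Y ≤ n * mutInfo μ X (fun ω => Y ω ⟨0, hn⟩) := calc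
    mutInfo μ X Y ≤ ∑ i, mutInfo μ X (fun ω => Y ω i) :=
      mutInfo_le_sum_of_condIndep hμ hn X Y hindep
    _ = n * mutInfo μ X (fun ω => Y ω ⟨0, hn⟩) := by
      simp [mutInfo_congr_right (hid · _ ·)]
  refine ⟨hsamples, ?_⟩
  rw [le_div_iff₀ (log_pos ((one_lt_div hmax0).2 (by linarith)))]
  linarith [fano_relational hμ X Xh R hmax0 hsum hmin hmax, mutInfo_le_of_markovChain hμ.1 hMC]

theorem fano_iid_samples {Ω A B C : Type*} [Fintype Ω] [Fintype A] [Fintype B] [Fintype C]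
    [DecidableEq A] [DecidableEq B] [DecidableEq C]
    (n : ℕ) (hn : 0 < n)
    (μ : Ω → ℝ) (hμ : IsPMF μ) (X : Ω → A) (Y : Ω → (Fin n → B)) (Xh : Ω → C)
    (hMC : MarkovChain μ X Y Xh)
    -- conditionally independent coordinates given `X`:
    (hindep : ∀ (a : A) (y : Fin n → B),
      pr μ (fun ω => X ω = a ∧ Y ω = y) * (pr μ (fun ω => X ω = a)) ^ (n - 1) =
        ∏ i : Fin n, pr μ (fun ω => X ω = a ∧ Y ω i = y i))
    -- conditionally identically distributed given `X`:
    (hid : ∀ (a : A) (i : Fin n) (b : B),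
      pr μ (fun ω => X ω = a ∧ Y ω i = b) = pr μ (fun ω => X ω = a ∧ Y ω ⟨0, hn⟩ = b))
    (R : Finset (A × C))
    (pmin pmax : ℝ) (hmin0 : 0 ≤ pmin) (hmin1 : pmin < 1) (hmax0 : 0 < pmax) (hmax1 : pmax ≤ 1)
    (hsum : pmin + pmax < 1)
    (hmin : ∀ ω₀ : Ω, pmin ≤ pr μ (fun ω => (X ω, Xh ω₀) ∈ R))
    (hmax : ∀ ω₀ : Ω, pr μ (fun ω => (X ω, Xh ω₀) ∈ R) ≤ pmax) :
    mutInfo μ X Y ≤ n * mutInfo μ X (fun ω => Y ω ⟨0, hn⟩) ∧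
    pr μ (fun ω => (X ω, Xh ω) ∈ R) ≤
      (n * mutInfo μ X (fun ω => Y ω ⟨0, hn⟩) +
          binEnt (pr μ (fun ω => (X ω, Xh ω) ∈ R)) + Real.log (1 - pmin)) /
        Real.log ((1 - pmin) / pmax) :=
  fano_iid_samples_general n hn μ hμ X Y Xh hMC hindep hid R pmin pmax hmax0 hsum hmin hmax
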